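/- arXiv:math/9805055 — 5 statements merged into one kernel-verified Lean document; each statement's English description precedes it below -/
import Mathlib

section
/- Let F be a finite field with q elements and let m₁, m₂ ≥ 0 be integers. For integers a, b ≥ 0 let P(a,b) denote the number of pairs (g₁, g₂) of nonzero homogeneous polynomials in F[X,Y] of degrees a and b respectively such that g₁ and g₂ are relatively prime. Then (q−1)·(q^{m₁+1}−1)·(q^{m₂+1}−1) = Σ_{d=0}^{min(m₁,m₂)} (q^{d+1}−1)·P(m₁−d, m₂−d). -/
open MvPolynomial

section Homog
variable {σ : Type*} {R : Type*} [CommRing R] [IsDomain R]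

lemma totalDegree_eq_sup (f : MvPolynomial σ R) :
    f.totalDegree = f.support.sup Finsupp.degree := rfl

/-- minimal degree occurring in the support -/
noncomputable def mdeg (f : MvPolynomial σ R) : ℕ := sInf (Finsupp.degree '' (f.support : Set (σ →₀ ℕ)))

lemma le_mdeg_of_mem {f : MvPolynomial σ R} {d} (hd : d ∈ f.support) :
    mdeg f ≤ d.degree := Nat.sInf_le ⟨d, hd, rfl⟩

lemma comp_top_ne_zero {f : MvPolynomial σ R} (hf : f ≠ 0) :
    homogeneousComponent f.totalDegree f ≠ 0 := by
  obtain ⟨d, hd, hdeg⟩ := Finset.exists_mem_eq_sup f.support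
    (MvPolynomial.support_nonempty.2 hf) Finsupp.degree
  intro h
  have := coeff_homogeneousComponent (σ := σ) (R := R) f.totalDegree f d
  rw [h, coeff_zero, if_pos (by rw [totalDegree_eq_sup, hdeg])] at this
  exact (MvPolynomial.mem_support_iff.1 hd) this.symm

lemma comp_mdeg_ne_zero {f : MvPolynomial σ R} (hf : f ≠ 0) :
    homogeneousComponent (mdeg f) f ≠ 0 := by
  have hne : (Finsupp.degree '' (f.support : Set (σ →₀ ℕ))).Nonempty :=
    Set.Nonempty.image _ (Finset.coe_nonempty.mpr (MvPolynomial.support_nonempty.2 hf))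
  obtain ⟨d, hd, hdeg⟩ := Nat.sInf_mem hne
  intro h
  have := coeff_homogeneousComponent (σ := σ) (R := R) (mdeg f) f d
  rw [h, coeff_zero, if_pos (show d.degree = mdeg f from hdeg)] at this
  exact (MvPolynomial.mem_support_iff.1 hd) this.symm

lemma comp_eq_zero_of_lt_mdeg {f : MvPolynomial σ R} {k : ℕ} (hk : k < mdeg f) :
    homogeneousComponent k f = 0 := by
  ext d
  rw [coeff_homogeneousComponent, coeff_zero]
  split_ifs with h
  · by_contra hc
    exact absurd (h ▸ le_mdeg_of_mem (MvPolynomial.mem_support_iff.2 hc)) (not_le.2 hk)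
  · rfl

lemma mdeg_le_totalDegree {f : MvPolynomial σ R} (hf : f ≠ 0) :
    mdeg f ≤ f.totalDegree := by
  by_contra h
  exact comp_top_ne_zero hf (comp_eq_zero_of_lt_mdeg (not_le.1 h))

/-- extreme components multiply -/
lemma comp_mul_extreme {f g : MvPolynomial σ R} {a b : ℕ}
    (ha : a ≤ f.totalDegree) (hb : b ≤ g.totalDegree)
    (hext : ∀ i j, homogeneousComponent i f ≠ 0 → homogeneousComponent j g ≠ 0 →
      i + j = a + b → i = a ∧ j = b) :
    homogeneousComponent (a + b) (f * g) =
      homogeneousComponent a f * homogeneousComponent b g := by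
  conv_lhs => rw [← sum_homogeneousComponent f, ← sum_homogeneousComponent g,
    Finset.sum_mul_sum]
  rw [map_sum]
  have key : ∀ i ∈ Finset.range (f.totalDegree + 1), ∀ j ∈ Finset.range (g.totalDegree + 1),
      homogeneousComponent (a + b) (homogeneousComponent i f * homogeneousComponent j g) =
        if i = a ∧ j = b then homogeneousComponent a f * homogeneousComponent b g else 0 := by
    intro i _ j _
    have hmem : (homogeneousComponent i f * homogeneousComponent j g) ∈
        homogeneousSubmodule σ R (i + j) :=
      ((homogeneousComponent_isHomogeneous i f).mul (homogeneousComponent_isHomogeneous j g))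
    rw [homogeneousComponent_of_mem hmem]
    by_cases hfi : homogeneousComponent i f = 0
    · by_cases hij : i = a ∧ j = b
      · obtain ⟨rfl, rfl⟩ := hij; simp [hfi]
      · simp [hfi, hij]
    by_cases hgj : homogeneousComponent j g = 0
    · by_cases hij : i = a ∧ j = b
      · obtain ⟨rfl, rfl⟩ := hij; simp [hgj]
      · simp [hgj, hij]
    by_cases hs : i + j = a + b
    · obtain ⟨rfl, rfl⟩ := hext i j hfi hgj hs; simp
    · rw [if_neg (fun h => hs h.symm), if_neg (by rintro ⟨rfl, rfl⟩; exact hs rfl)]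
  calc ∑ i ∈ Finset.range (f.totalDegree + 1),
        homogeneousComponent (a + b)
          (∑ j ∈ Finset.range (g.totalDegree + 1),
            homogeneousComponent i f * homogeneousComponent j g)
      = ∑ i ∈ Finset.range (f.totalDegree + 1), ∑ j ∈ Finset.range (g.totalDegree + 1),
          (if i = a ∧ j = b then
            homogeneousComponent a f * homogeneousComponent b g else 0) := by
        refine Finset.sum_congr rfl fun i hi => ?_
        rw [map_sum]
        exact Finset.sum_congr rfl fun j hj => key i hi j hj
    _ = homogeneousComponent a f * homogeneousComponent b g := by
        rw [Finset.sum_comm]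
        rw [Finset.sum_eq_single b]
        · simp only [and_true]
          rw [Finset.sum_ite_eq' (Finset.range (f.totalDegree + 1)) a]
          rw [if_pos (Finset.mem_range.2 (by omega))]
        · intro j _ hj
          apply Finset.sum_eq_zero; intro i _
          rw [if_neg (by tauto)]
        · intro hb'
          exact absurd (Finset.mem_range.2 (by omega)) hb'

theorem isHomogeneous_of_mul_isHomogeneous {f g : MvPolynomial σ R} {n : ℕ}
    (hf : f ≠ 0) (hg : g ≠ 0) (h : (f * g).IsHomogeneous n) :
    f.IsHomogeneous f.totalDegree ∧ g.IsHomogeneous g.totalDegree ∧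
      f.totalDegree + g.totalDegree = n := by
  have hfg : f * g ≠ 0 := mul_ne_zero hf hg
  have hcomp : ∀ a b : ℕ, a ≤ f.totalDegree → b ≤ g.totalDegree →
      homogeneousComponent a f ≠ 0 → homogeneousComponent b g ≠ 0 →
      (∀ i j, homogeneousComponent i f ≠ 0 → homogeneousComponent j g ≠ 0 →
        i + j = a + b → i = a ∧ j = b) → a + b = n := by
    intro a b ha hb hfa hgb hext
    have := comp_mul_extreme ha hb hext
    have hne : homogeneousComponent (a + b) (f * g) ≠ 0 := by
      rw [this]; exact mul_ne_zero hfa hgb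
    by_contra hab
    rw [homogeneousComponent_of_mem ((mem_homogeneousSubmodule n (f*g)).2 h), if_neg hab]
      at hne
    exact hne rfl
  -- every nonzero component of f lies between mdeg f and totalDegree f
  have hrange : ∀ (p : MvPolynomial σ R) (i : ℕ), homogeneousComponent i p ≠ 0 →
      mdeg p ≤ i ∧ i ≤ p.totalDegree := by
    intro p i hip
    constructor
    · by_contra hlt
      exact hip (comp_eq_zero_of_lt_mdeg (not_le.1 hlt))
    · by_contra hlt
      exact hip (homogeneousComponent_eq_zero _ p (not_le.1 hlt))
  have htop : f.totalDegree + g.totalDegree = n :=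
    hcomp _ _ le_rfl le_rfl (comp_top_ne_zero hf) (comp_top_ne_zero hg)
      (fun i j hi hj hs => by
        have := (hrange f i hi).2; have := (hrange g j hj).2; omega)
  have hmin : mdeg f + mdeg g = n :=
    hcomp _ _ (mdeg_le_totalDegree hf) (mdeg_le_totalDegree hg)
      (comp_mdeg_ne_zero hf) (comp_mdeg_ne_zero hg)
      (fun i j hi hj hs => by
        have := (hrange f i hi).1; have := (hrange g j hj).1; omega)
  have hf' : mdeg f = f.totalDegree := by
    have := mdeg_le_totalDegree hf; have := mdeg_le_totalDegree hg; omega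
  have hg' : mdeg g = g.totalDegree := by
    have := mdeg_le_totalDegree hf; have := mdeg_le_totalDegree hg; omega
  refine ⟨?_, ?_, htop⟩
  · intro d hd
    have hmem : d ∈ f.support := MvPolynomial.mem_support_iff.2 hd
    have h1 := le_mdeg_of_mem hmem
    have h2 : d.degree ≤ f.totalDegree := Finset.le_sup (f := Finsupp.degree) hmem
    rw [show (Finsupp.weight 1 : (σ →₀ ℕ) →+ ℕ) = Finsupp.degree from Finsupp.degree_eq_weight_one.symm]
    omega
  · intro d hd
    have hmem : d ∈ g.support := MvPolynomial.mem_support_iff.2 hd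
    have h1 := le_mdeg_of_mem hmem
    have h2 : d.degree ≤ g.totalDegree := Finset.le_sup (f := Finsupp.degree) hmem
    rw [show (Finsupp.weight 1 : (σ →₀ ℕ) →+ ℕ) = Finsupp.degree from Finsupp.degree_eq_weight_one.symm]
    omega

end Homog

section FieldStuff
variable {K : Type*} [Field K] {σ : Type*}

lemma eq_C_of_totalDegree_eq_zero {p : MvPolynomial σ K} (h : p.totalDegree = 0) :
    p = C (coeff 0 p) := by
  classical
  ext d
  by_cases hd : d = 0
  · subst hd; simp
  · rw [coeff_C, if_neg (Ne.symm hd)]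
    by_contra hc
    have := (totalDegree_eq_zero_iff _ p).1 h d (MvPolynomial.mem_support_iff.2 hc)
    exact hd (Finsupp.ext fun x => this x)

lemma isUnit_iff_C {w : MvPolynomial σ K} : IsUnit w ↔ ∃ c : Kˣ, w = C (c : K) := by
  constructor
  · rintro ⟨u, rfl⟩
    have h1 : ((u : MvPolynomial σ K) * ((u⁻¹ : (MvPolynomial σ K)ˣ) : MvPolynomial σ K))
        = 1 := u.mul_inv
    have hne : (u : MvPolynomial σ K) ≠ 0 := Units.ne_zero u
    have hne' : ((u⁻¹ : (MvPolynomial σ K)ˣ) : MvPolynomial σ K) ≠ 0 := Units.ne_zero _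
    have hh : ((u : MvPolynomial σ K) *
        ((u⁻¹ : (MvPolynomial σ K)ˣ) : MvPolynomial σ K)).IsHomogeneous 0 := by
      rw [h1]; exact isHomogeneous_one σ K
    obtain ⟨hu, _, hsum⟩ := isHomogeneous_of_mul_isHomogeneous hne hne' hh
    have ht : (u : MvPolynomial σ K).totalDegree = 0 := by omega
    have heq := eq_C_of_totalDegree_eq_zero ht
    have hcu : IsUnit (coeff 0 (u : MvPolynomial σ K)) := by
      have : IsUnit (constantCoeff (u : MvPolynomial σ K)) :=
        u.isUnit.map constantCoeff
      simpa [constantCoeff_eq] using this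
    refine ⟨hcu.unit, ?_⟩
    conv_lhs => rw [heq]
    rw [IsUnit.unit_spec]
  · rintro ⟨c, rfl⟩
    exact (c.isUnit.map (C : K →+* MvPolynomial σ K))

variable [Fintype σ]

lemma exists_relPrime_decomp {f₁ f₂ : MvPolynomial σ K} (h₁ : f₁ ≠ 0) (h₂ : f₂ ≠ 0) :
    ∃ h g₁ g₂ : MvPolynomial σ K, f₁ = h * g₁ ∧ f₂ = h * g₂ ∧ IsRelPrime g₁ g₂ := by
  letI : GCDMonoid (MvPolynomial σ K) := UniqueFactorizationMonoid.toGCDMonoid _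
  obtain ⟨g₁, hg₁⟩ := gcd_dvd_left f₁ f₂
  obtain ⟨g₂, hg₂⟩ := gcd_dvd_right f₁ f₂
  have hgcd : gcd f₁ f₂ ≠ 0 := fun h => h₁ (by rwa [h, zero_mul] at hg₁)
  refine ⟨gcd f₁ f₂, g₁, g₂, hg₁, hg₂, fun c hc1 hc2 => ?_⟩
  obtain ⟨e₁, rfl⟩ := hc1
  obtain ⟨e₂, rfl⟩ := hc2
  have hd : gcd f₁ f₂ * c ∣ gcd f₁ f₂ * 1 := by
    rw [mul_one]
    exact dvd_gcd ⟨e₁, by rw [mul_assoc]; exact hg₁⟩ ⟨e₂, by rw [mul_assoc]; exact hg₂⟩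
  exact isUnit_of_dvd_one ((mul_dvd_mul_iff_left hgcd).1 hd)

lemma dvd_of_common_dvd {f₁ f₂ h g₁ g₂ h' : MvPolynomial σ K}
    (hf₁ : f₁ ≠ 0) (e₁ : f₁ = h * g₁) (e₂ : f₂ = h * g₂) (hrp : IsRelPrime g₁ g₂)
    (hd₁ : h' ∣ f₁) (hd₂ : h' ∣ f₂) : h' ∣ h := by
  letI : GCDMonoid (MvPolynomial σ K) := UniqueFactorizationMonoid.toGCDMonoid _
  have h1 : h' ∣ gcd f₁ f₂ := dvd_gcd hd₁ hd₂
  have h2 : Associated (gcd f₁ f₂) (h * gcd g₁ g₂) := by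
    rw [e₁, e₂]; exact gcd_mul_left' h g₁ g₂
  have hu : IsUnit (gcd g₁ g₂) := hrp (gcd_dvd_left _ _) (gcd_dvd_right _ _)
  have h3 : h * gcd g₁ g₂ ∣ h := (hu.mul_right_dvd).2 dvd_rfl
  exact h1.trans (h2.dvd.trans h3)

lemma decomp_homog {m₁ m₂ : ℕ} {f₁ f₂ : MvPolynomial σ K} (h₁ : f₁ ≠ 0) (h₂ : f₂ ≠ 0)
    (hm₁ : f₁.IsHomogeneous m₁) (hm₂ : f₂.IsHomogeneous m₂) :
    ∃ (d : ℕ) (h g₁ g₂ : MvPolynomial σ K), d ≤ min m₁ m₂ ∧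
      h ≠ 0 ∧ h.IsHomogeneous d ∧
      g₁ ≠ 0 ∧ g₁.IsHomogeneous (m₁ - d) ∧ g₂ ≠ 0 ∧ g₂.IsHomogeneous (m₂ - d) ∧
      f₁ = h * g₁ ∧ f₂ = h * g₂ ∧ IsRelPrime g₁ g₂ := by
  obtain ⟨h, g₁, g₂, e₁, e₂, hrp⟩ := exists_relPrime_decomp h₁ h₂
  have hh : h ≠ 0 := fun hz => h₁ (by rw [e₁, hz, zero_mul])
  have hg₁ : g₁ ≠ 0 := fun hz => h₁ (by rw [e₁, hz, mul_zero])
  have hg₂ : g₂ ≠ 0 := fun hz => h₂ (by rw [e₂, hz, mul_zero])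
  obtain ⟨hhom₁, ghom₁, hd₁⟩ := isHomogeneous_of_mul_isHomogeneous hh hg₁ (e₁ ▸ hm₁)
  obtain ⟨_, ghom₂, hd₂⟩ := isHomogeneous_of_mul_isHomogeneous hh hg₂ (e₂ ▸ hm₂)
  refine ⟨h.totalDegree, h, g₁, g₂, by omega, hh, hhom₁, hg₁, ?_, hg₂, ?_, e₁, e₂, hrp⟩
  · have : g₁.totalDegree = m₁ - h.totalDegree := by omega
    exact this ▸ ghom₁
  · have : g₂.totalDegree = m₂ - h.totalDegree := by omega
    exact this ▸ ghom₂

end FieldStuff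

section Counting
variable {K : Type*} [Field K]

/-- the exponent vector `X^i Y^(a-i)` -/
noncomputable def Dv (a : ℕ) (i : Fin (a + 1)) : Fin 2 →₀ ℕ :=
  Finsupp.single 0 (i : ℕ) + Finsupp.single 1 (a - (i : ℕ))

lemma Dv_apply0 (a : ℕ) (i : Fin (a + 1)) : Dv a i 0 = (i : ℕ) := by
  simp [Dv, Finsupp.single_apply]

lemma Dv_apply1 (a : ℕ) (i : Fin (a + 1)) : Dv a i 1 = a - (i : ℕ) := by
  simp [Dv, Finsupp.single_apply]

lemma degree_fin2 (d : Fin 2 →₀ ℕ) : d.degree = d 0 + d 1 := by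
  classical
  rw [Finsupp.degree_apply, Finset.sum_subset (Finset.subset_univ d.support)
    (fun x _ hx => Finsupp.notMem_support_iff.1 hx), Fin.sum_univ_two]

lemma Dv_degree (a : ℕ) (i : Fin (a + 1)) : (Dv a i).degree = a := by
  have := i.isLt
  rw [degree_fin2, Dv_apply0, Dv_apply1]; omega

lemma Dv_inj (a : ℕ) : Function.Injective (Dv a) := by
  intro i j h
  have := congrArg (fun d => d 0) h
  simp only [Dv_apply0] at this
  exact Fin.ext this

lemma eq_Dv_of_degree {a : ℕ} {d : Fin 2 →₀ ℕ} (h : d.degree = a) :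
    d = Dv a ⟨d 0, by rw [degree_fin2] at h; omega⟩ := by
  rw [degree_fin2] at h
  ext x
  fin_cases x
  · show d 0 = Dv a _ 0
    rw [Dv_apply0]
  · show d 1 = Dv a _ 1
    rw [Dv_apply1]; simp only [Fin.val_mk]; omega

/-- homogeneous polynomials of degree `a` in two variables biject with coefficient vectors -/
noncomputable def homogEquiv (a : ℕ) :
    {p : MvPolynomial (Fin 2) K // p.IsHomogeneous a} ≃ (Fin (a + 1) → K) where
  toFun p i := coeff (Dv a i) p.1
  invFun c := ⟨∑ i : Fin (a + 1), monomial (Dv a i) (c i),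
    IsHomogeneous.sum _ _ _ fun i _ => isHomogeneous_monomial _ (Dv_degree a i)⟩
  left_inv := by
    rintro ⟨p, hp⟩
    ext d
    classical
    rw [coeff_sum]
    by_cases hd : d.degree = a
    · rw [Finset.sum_eq_single ⟨d 0, by rw [degree_fin2] at hd; omega⟩]
      · rw [coeff_monomial, if_pos (eq_Dv_of_degree hd).symm]
        show coeff _ p = coeff d p
        conv_rhs => rw [eq_Dv_of_degree hd]
      · intro j _ hj
        rw [coeff_monomial, if_neg]
        intro he
        exact hj (Dv_inj a (he.trans (eq_Dv_of_degree hd)))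
      · intro h; exact absurd (Finset.mem_univ _) h
    · rw [hp.coeff_eq_zero hd, Finset.sum_eq_zero]
      intro j _
      rw [coeff_monomial, if_neg]
      intro he
      exact hd (he ▸ Dv_degree a j)
  right_inv := by
    intro c
    funext i
    classical
    simp only [coeff_sum, coeff_monomial]
    rw [Finset.sum_eq_single i]
    · rw [if_pos rfl]
    · intro j _ hj; rw [if_neg (fun he => hj (Dv_inj a he))]
    · intro h; exact absurd (Finset.mem_univ _) h

variable [Fintype K]

noncomputable instance (a : ℕ) :
    Fintype {p : MvPolynomial (Fin 2) K // p.IsHomogeneous a} :=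
  Fintype.ofEquiv _ (homogEquiv a).symm

lemma card_homog (a : ℕ) :
    Nat.card {p : MvPolynomial (Fin 2) K // p.IsHomogeneous a} =
      Fintype.card K ^ (a + 1) := by
  rw [Nat.card_eq_fintype_card, Fintype.card_congr (homogEquiv a)]
  simp

lemma card_homog_ne (a : ℕ) :
    Nat.card {p : MvPolynomial (Fin 2) K // p ≠ 0 ∧ p.IsHomogeneous a} =
      Fintype.card K ^ (a + 1) - 1 := by
  classical
  have e : {p : MvPolynomial (Fin 2) K // p ≠ 0 ∧ p.IsHomogeneous a} ≃
      {x : {p : MvPolynomial (Fin 2) K // p.IsHomogeneous a} //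
        ¬ (x = ⟨0, isHomogeneous_zero _ _ _⟩)} :=
    { toFun := fun p => ⟨⟨p.1, p.2.2⟩, fun h => p.2.1 (congrArg Subtype.val h)⟩
      invFun := fun x => ⟨x.1.1, fun h => x.2 (Subtype.ext h), x.1.2⟩
      left_inv := fun p => rfl
      right_inv := fun x => rfl }
  rw [Nat.card_congr e, Nat.card_eq_fintype_card, Fintype.card_subtype_compl,
    Fintype.card_subtype_eq, ← Nat.card_eq_fintype_card, card_homog]

end Counting

section Main
variable (K : Type*) [Field K]

abbrev HS (a : ℕ) := {p : MvPolynomial (Fin 2) K // p ≠ 0 ∧ p.IsHomogeneous a}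

abbrev RPS (a b : ℕ) :=
  {p : MvPolynomial (Fin 2) K × MvPolynomial (Fin 2) K //
    p.1 ≠ 0 ∧ p.2 ≠ 0 ∧ p.1.IsHomogeneous a ∧ p.2.IsHomogeneous b ∧ IsRelPrime p.1 p.2}

instance [Fintype K] (a : ℕ) : Finite (HS K a) :=
  Finite.of_injective
    (fun x => (⟨x.1, x.2.2⟩ : {p : MvPolynomial (Fin 2) K // p.IsHomogeneous a}))
    (by intro x y h
        rw [Subtype.mk.injEq] at h
        exact Subtype.ext h)

instance [Fintype K] (a b : ℕ) : Finite (RPS K a b) :=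
  Finite.of_injective
    (fun x => ((⟨x.1.1, x.2.2.2.1⟩ : {p : MvPolynomial (Fin 2) K // p.IsHomogeneous a}),
      (⟨x.1.2, x.2.2.2.2.1⟩ : {p : MvPolynomial (Fin 2) K // p.IsHomogeneous b})))
    (fun x y h => by
      apply Subtype.ext
      have h1 := congrArg (fun z => z.1.1) h
      have h2 := congrArg (fun z => z.2.1) h
      exact Prod.ext h1 h2)

lemma key_bij (m₁ m₂ : ℕ) :
    Nat.card ((d : Fin (min m₁ m₂ + 1)) × (HS K d × RPS K (m₁ - d) (m₂ - d))) =
      Nat.card (Kˣ × (HS K m₁ × HS K m₂)) := by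
  classical
  choose dd hh gg1 gg2 hpr using fun x : HS K m₁ × HS K m₂ =>
    decomp_homog x.1.2.1 x.2.2.1 x.1.2.2 x.2.2.2
  -- recombination map
  let T := (d : Fin (min m₁ m₂ + 1)) × (HS K d × RPS K (m₁ - d) (m₂ - d))
  let fm : T → HS K m₁ × HS K m₂ := fun t =>
    (⟨t.2.1.1 * t.2.2.1.1, mul_ne_zero t.2.1.2.1 t.2.2.2.1, by
        have hlt : (t.1 : ℕ) ≤ min m₁ m₂ := by have := t.1.isLt; omega
        have heq : (t.1 : ℕ) + (m₁ - (t.1 : ℕ)) = m₁ := by omega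
        have hmul := t.2.1.2.2.mul t.2.2.2.2.2.1
        rwa [heq] at hmul⟩,
     ⟨t.2.1.1 * t.2.2.1.2, mul_ne_zero t.2.1.2.1 t.2.2.2.2.1, by
        have hlt : (t.1 : ℕ) ≤ min m₁ m₂ := by have := t.1.isLt; omega
        have heq : (t.1 : ℕ) + (m₂ - (t.1 : ℕ)) = m₂ := by omega
        have hmul := t.2.1.2.2.mul t.2.2.2.2.2.2.1
        rwa [heq] at hmul⟩)
  have hcex : ∀ t : T, ∃ c : Kˣ, t.2.1.1 = C (c : K) * hh (fm t) := by
    intro t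
    obtain ⟨hdle, hhne, hhhom, hg1ne, hg1hom, hg2ne, hg2hom, he1, he2, hrpc⟩ := hpr (fm t)
    have e1 : (fm t).1.1 = t.2.1.1 * t.2.2.1.1 := rfl
    have e2 : (fm t).2.1 = t.2.1.1 * t.2.2.1.2 := rfl
    have hf1ne : (fm t).1.1 ≠ 0 := (fm t).1.2.1
    have d1 : t.2.1.1 ∣ hh (fm t) :=
      dvd_of_common_dvd hf1ne he1 he2 hrpc ⟨t.2.2.1.1, e1⟩ ⟨t.2.2.1.2, e2⟩
    have d2 : hh (fm t) ∣ t.2.1.1 :=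
      dvd_of_common_dvd hf1ne e1 e2 t.2.2.2.2.2.2.2 ⟨gg1 (fm t), he1⟩ ⟨gg2 (fm t), he2⟩
    obtain ⟨w, hw⟩ := associated_of_dvd_dvd d2 d1
    obtain ⟨c, hc⟩ := isUnit_iff_C.1 w.isUnit
    exact ⟨c, by rw [← hw, hc, mul_comm]⟩
  choose cc hcc using hcex
  refine Nat.card_congr (Equiv.ofBijective (fun t : T => (cc t, fm t)) ⟨?_, ?_⟩)
  · -- injectivity
    rintro ⟨d, x⟩ ⟨d', x'⟩ h
    have hcceq : cc ⟨d, x⟩ = cc ⟨d', x'⟩ := congrArg Prod.fst h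
    have hfmeq : fm ⟨d, x⟩ = fm ⟨d', x'⟩ := congrArg Prod.snd h
    have hh_eq : x.1.1 = x'.1.1 := by
      rw [hcc ⟨d, x⟩, hcc ⟨d', x'⟩, hcceq, hfmeq]
    have hd : d = d' := by
      apply Fin.ext
      exact IsHomogeneous.inj_right x.1.2.2 (hh_eq ▸ x'.1.2.2) x.1.2.1
    subst hd
    have hfm1 : x.1.1 * x.2.1.1 = x'.1.1 * x'.2.1.1 :=
      congrArg (fun z => z.1.1) hfmeq
    have hfm2 : x.1.1 * x.2.1.2 = x'.1.1 * x'.2.1.2 :=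
      congrArg (fun z => z.2.1) hfmeq
    rw [← hh_eq] at hfm1 hfm2
    have hg1 : x.2.1.1 = x'.2.1.1 := mul_left_cancel₀ x.1.2.1 hfm1
    have hg2 : x.2.1.2 = x'.2.1.2 := mul_left_cancel₀ x.1.2.1 hfm2
    exact congrArg (Sigma.mk d)
      (Prod.ext (Subtype.ext hh_eq) (Subtype.ext (Prod.ext hg1 hg2)))
  · -- surjectivity
    rintro ⟨u, x⟩
    obtain ⟨hdle, hhne, hhhom, hg1ne, hg1hom, hg2ne, hg2hom, he1, he2, hrpc⟩ := hpr x
    have hCu : (C (u : K) : MvPolynomial (Fin 2) K) ≠ 0 := by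
      simp [MvPolynomial.C_eq_zero]
    have hCui : (C ((u⁻¹ : Kˣ) : K) : MvPolynomial (Fin 2) K) ≠ 0 := by
      simp [MvPolynomial.C_eq_zero]
    have hkey1 : (C ((u⁻¹ : Kˣ) : K) * gg1 x) * C (u : K) = gg1 x := by
      rw [mul_comm, ← mul_assoc, ← map_mul]
      simp
    have hkey2 : (C ((u⁻¹ : Kˣ) : K) * gg2 x) * C (u : K) = gg2 x := by
      rw [mul_comm, ← mul_assoc, ← map_mul]
      simp
    have hrps : IsRelPrime (C ((u⁻¹ : Kˣ) : K) * gg1 x) (C ((u⁻¹ : Kˣ) : K) * gg2 x) := by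
      intro c hc1 hc2
      exact hrpc (hc1.trans ⟨C (u : K), hkey1.symm⟩) (hc2.trans ⟨C (u : K), hkey2.symm⟩)
    let t₀ : T := ⟨⟨dd x, by omega⟩,
      ⟨⟨C (u : K) * hh x, mul_ne_zero hCu hhne, hhhom.C_mul _⟩,
       ⟨(C ((u⁻¹ : Kˣ) : K) * gg1 x, C ((u⁻¹ : Kˣ) : K) * gg2 x),
        mul_ne_zero hCui hg1ne, mul_ne_zero hCui hg2ne,
        hg1hom.C_mul _, hg2hom.C_mul _, hrps⟩⟩⟩
    refine ⟨t₀, ?_⟩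
    have hfm : fm t₀ = x := by
      refine Prod.ext (Subtype.ext ?_) (Subtype.ext ?_)
      · show C (u : K) * hh x * (C ((u⁻¹ : Kˣ) : K) * gg1 x) = x.1.1
        rw [mul_mul_mul_comm, ← map_mul, Units.mul_inv, map_one, one_mul]
        exact he1.symm
      · show C (u : K) * hh x * (C ((u⁻¹ : Kˣ) : K) * gg2 x) = x.2.1
        rw [mul_mul_mul_comm, ← map_mul, Units.mul_inv, map_one, one_mul]
        exact he2.symm
    refine Prod.ext ?_ hfm
    · show cc t₀ = u
      have h1 := hcc t₀
      rw [hfm] at h1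
      have hC : C ((cc t₀ : Kˣ) : K) * hh x = C (u : K) * hh x := by
        rw [← h1]
      have h2 := mul_right_cancel₀ hhne hC
      exact Units.ext (MvPolynomial.C_injective _ _ h2)

end Main

lemma card_HS (K : Type*) [Field K] [Fintype K] (a : ℕ) :
    Nat.card (HS K a) = Fintype.card K ^ (a + 1) - 1 := card_homog_ne a

/-- point-count form of the stratification of pairs of nonzero
binary forms by the degree of their greatest common divisor. -/
theorem stmt2 (F : Type) [Field F] [Fintype F] (q : ℕ) (hq : Fintype.card F = q)
    (m₁ m₂ : ℕ) (P : ℕ → ℕ → ℕ)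
    (hP : ∀ a b : ℕ, P a b =
      Nat.card {p : MvPolynomial (Fin 2) F × MvPolynomial (Fin 2) F //
        p.1 ≠ 0 ∧ p.2 ≠ 0 ∧ p.1.IsHomogeneous a ∧ p.2.IsHomogeneous b ∧
        IsRelPrime p.1 p.2}) :
    (q - 1) * (q ^ (m₁ + 1) - 1) * (q ^ (m₂ + 1) - 1) =
      ∑ d ∈ Finset.range (min m₁ m₂ + 1), (q ^ (d + 1) - 1) * P (m₁ - d) (m₂ - d) := by
  classical
  subst hq
  have hbij := key_bij F m₁ m₂
  letI : ∀ d : Fin (min m₁ m₂ + 1), Fintype (HS F (d : ℕ) × RPS F (m₁ - d) (m₂ - d)) :=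
    fun d => Fintype.ofFinite _
  have hT : Nat.card ((d : Fin (min m₁ m₂ + 1)) × (HS F d × RPS F (m₁ - d) (m₂ - d))) =
      ∑ d ∈ Finset.range (min m₁ m₂ + 1),
        (Fintype.card F ^ (d + 1) - 1) * P (m₁ - d) (m₂ - d) := by
    rw [Nat.card_eq_fintype_card, Fintype.card_sigma]
    have hterm : ∀ d : Fin (min m₁ m₂ + 1),
        Fintype.card (HS F (d : ℕ) × RPS F (m₁ - (d : ℕ)) (m₂ - (d : ℕ))) =
          (fun k => (Fintype.card F ^ (k + 1) - 1) * P (m₁ - k) (m₂ - k)) (d : ℕ) := by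
      intro d
      have hRPS : Nat.card (RPS F (m₁ - (d : ℕ)) (m₂ - (d : ℕ))) =
          P (m₁ - (d : ℕ)) (m₂ - (d : ℕ)) := by
        rw [hP]
      rw [← Nat.card_eq_fintype_card, Nat.card_prod, card_HS, hRPS]
    calc (∑ d : Fin (min m₁ m₂ + 1),
          Fintype.card (HS F (d : ℕ) × RPS F (m₁ - (d : ℕ)) (m₂ - (d : ℕ))))
        = (∑ d : Fin (min m₁ m₂ + 1),
            (fun k => (Fintype.card F ^ (k + 1) - 1) * P (m₁ - k) (m₂ - k)) (d : ℕ)) :=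
          Finset.sum_congr rfl (fun d _ => hterm d)
      _ = ∑ d ∈ Finset.range (min m₁ m₂ + 1),
            (Fintype.card F ^ (d + 1) - 1) * P (m₁ - d) (m₂ - d) :=
          by
            exact Fin.sum_univ_eq_sum_range
              (fun k => (Fintype.card F ^ (k + 1) - 1) * P (m₁ - k) (m₂ - k)) _
  have hB : Nat.card (Fˣ × (HS F m₁ × HS F m₂)) =
      (Fintype.card F - 1) *
        ((Fintype.card F ^ (m₁ + 1) - 1) * (Fintype.card F ^ (m₂ + 1) - 1)) := by
    rw [Nat.card_prod, Nat.card_prod, card_HS, card_HS, Nat.card_eq_fintype_card,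
      Fintype.card_units]
  rw [mul_assoc, ← hB, ← hbij, hT]
end

section
/- Fix integers s ≥ 0 and n ≥ 0. Let A′(s,n) be the set of tuples (d₁, …, d_{2s+1}) of nonnegative integers satisfying d_{2i} ≤ d_{2i−1} for 1 ≤ i ≤ s, d_{2i+1} ≤ d_{2i} − 1 for 1 ≤ i ≤ s, and d₁ + ⋯ + d_{2s+1} = n. Let B′(s,n) be the set of tuples (d′₁, …, d′_{2s+1}) of nonnegative integers satisfying Σ_{i=1}^{2s+1} i·d′ᵢ = n − s² − s (so B′(s,n) is empty if n < s² + s). Then the map sending (d₁, …, d_{2s+1}) to (d′₁, …, d′_{2s+1}) defined by d′_{2i−1} = d_{2i−1} − d_{2i} for 1 ≤ i ≤ s, d′_{2i} = d_{2i} − d_{2i+1} − 1 for 1 ≤ i ≤ s, and d′_{2s+1} = d_{2s+1}, is a well-defined bijection from A′(s,n) onto B′(s,n). -/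
/-- Inverse map of the bijection. -/
def stmt4g (s : ℕ) (d' : ℕ → ℕ) (i : ℕ) : ℕ :=
  if i < 1 ∨ 2 * s + 1 < i then 0
  else (∑ j ∈ Finset.Icc i (2 * s + 1), d' j) + (s + 1 - (i + 1) / 2)

lemma stmt4_sum_bot {a b : ℕ} (h : a ≤ b) (f : ℕ → ℕ) :
    ∑ j ∈ Finset.Icc a b, f j = f a + ∑ j ∈ Finset.Icc (a + 1) b, f j := by
  rw [Finset.Icc_eq_cons_Ioc h, Finset.sum_cons, Finset.Icc_add_one_left_eq_Ioc]

lemma stmt4_double_sum (m : ℕ) (a : ℕ → ℕ) :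
    ∑ i ∈ Finset.Icc 1 m, ∑ j ∈ Finset.Icc i m, a j
      = ∑ j ∈ Finset.Icc 1 m, j * a j := by
  induction m with
  | zero => simp
  | succ m ih =>
    have h1 : ∀ i ∈ Finset.Icc 1 m,
        ∑ j ∈ Finset.Icc i (m + 1), a j = (∑ j ∈ Finset.Icc i m, a j) + a (m + 1) := by
      intro i hi
      exact Finset.sum_Icc_succ_top (by simp at hi; omega) _
    rw [Finset.sum_Icc_succ_top (f := fun i => ∑ j ∈ Finset.Icc i (m + 1), a j) (by omega),
      Finset.Icc_self, Finset.sum_singleton,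
      Finset.sum_congr rfl h1, Finset.sum_add_distrib, ih, Finset.sum_const,
      Nat.card_Icc, Finset.sum_Icc_succ_top (f := fun j => j * a j) (by omega)]
    simp only [Nat.add_sub_cancel, smul_eq_mul]
    ring

lemma stmt4_const_sum (s : ℕ) :
    ∑ i ∈ Finset.Icc 1 (2 * s + 1), (s + 1 - (i + 1) / 2) = s ^ 2 + s := by
  induction s with
  | zero => simp
  | succ s ih =>
    have he : 2 * (s + 1) + 1 = (2 * s + 2) + 1 := by ring
    rw [he, Finset.sum_Icc_succ_top (by omega), show (2*s+2 : ℕ) = (2*s+1)+1 by ring,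
      Finset.sum_Icc_succ_top (by omega)]
    have h1 : ∀ i ∈ Finset.Icc 1 (2 * s + 1),
        (s + 1 + 1 - (i + 1) / 2) = (s + 1 - (i + 1) / 2) + 1 := by
      intro i hi
      simp only [Finset.mem_Icc] at hi
      omega
    rw [Finset.sum_congr rfl h1, Finset.sum_add_distrib, ih, Finset.sum_const,
      Nat.card_Icc]
    simp only [smul_eq_mul, mul_one, Nat.add_sub_cancel]
    have hsq : (s + 1) ^ 2 + (s + 1) = s ^ 2 + s + 2 * s + 2 := by ring
    omega

lemma stmt4_sumg (s : ℕ) (d' : ℕ → ℕ) :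
    ∑ i ∈ Finset.Icc 1 (2 * s + 1), stmt4g s d' i
      = (∑ i ∈ Finset.Icc 1 (2 * s + 1), i * d' i) + s ^ 2 + s := by
  have h1 : ∀ i ∈ Finset.Icc 1 (2 * s + 1),
      stmt4g s d' i = (∑ j ∈ Finset.Icc i (2 * s + 1), d' j) + (s + 1 - (i + 1) / 2) := by
    intro i hi
    simp only [Finset.mem_Icc] at hi
    rw [stmt4g, if_neg (by omega)]
  rw [Finset.sum_congr rfl h1, Finset.sum_add_distrib, stmt4_double_sum,
    stmt4_const_sum]
  ring

section
variable (s : ℕ)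

/-- the forward map -/
def stmt4f (d : ℕ → ℕ) (i : ℕ) : ℕ :=
  if i < 1 ∨ 2 * s + 1 < i then 0
  else if i = 2 * s + 1 then d i
  else if i % 2 = 1 then d i - d (i + 1)
  else d i - d (i + 1) - 1

lemma stmt4_left_aux (d : ℕ → ℕ)
    (h2 : ∀ i : ℕ, 1 ≤ i → i ≤ s → d (2 * i) ≤ d (2 * i - 1))
    (h3 : ∀ i : ℕ, 1 ≤ i → i ≤ s → d (2 * i + 1) + 1 ≤ d (2 * i)) :
    ∀ k i : ℕ, i + k = 2 * s + 1 → 1 ≤ i →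
      (∑ j ∈ Finset.Icc i (2 * s + 1), stmt4f s d j) + (s + 1 - (i + 1) / 2) = d i := by
  intro k
  induction k with
  | zero =>
    intro i hik hi
    have : i = 2 * s + 1 := by omega
    subst this
    rw [Finset.Icc_self, Finset.sum_singleton, stmt4f, if_neg (by omega), if_pos rfl]
    omega
  | succ k ihk =>
    intro i hik hi
    have hle : i ≤ 2 * s := by omega
    rw [stmt4_sum_bot (by omega)]
    have IH := ihk (i + 1) (by omega) (by omega)
    have hf : stmt4f s d i = if i % 2 = 1 then d i - d (i + 1) else d i - d (i + 1) - 1 := by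
      rw [stmt4f, if_neg (by omega), if_neg (by omega)]
    rcases Nat.even_or_odd i with he | ho
    · -- i even
      obtain ⟨j, hj⟩ := he
      have hj1 : 1 ≤ j := by omega
      have hj2 : j ≤ s := by omega
      have h3' := h3 j hj1 hj2
      have hmod : i % 2 = 0 := by omega
      rw [hf, if_neg (by omega)]
      have h2j : 2 * j = i := by omega
      rw [h2j] at h3'
      omega
    · -- i odd
      obtain ⟨j, hj⟩ := ho
      have hj1 : 1 ≤ j + 1 := by omega
      have hj2 : j + 1 ≤ s := by omega
      have h2' := h2 (j + 1) hj1 hj2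
      have e2 : 2 * (j + 1) - 1 = i := by omega
      rw [e2, show 2 * (j + 1) = i + 1 by omega] at h2'
      have hmod : i % 2 = 1 := by omega
      rw [hf, if_pos hmod]
      omega

end

/-- the analogue for `a = 1` of the change of indices
(3.12)-(3.13): a bijection from the set `A′(s,n)` of indexing tuples
`(d₁,…,d_{2s+1})` onto the set `B′(s,n)` of tuples of nonnegative integers with
`Σ i·d′ᵢ = n − s² − s`.  Tuples are encoded as functions `ℕ → ℕ` supported on
`{1,…,2s+1}`. -/
theorem stmt4 (s n : ℕ) :
    Set.BijOn
      (fun (d : ℕ → ℕ) (i : ℕ) =>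
        if i < 1 ∨ 2 * s + 1 < i then 0
        else if i = 2 * s + 1 then d i
        else if i % 2 = 1 then d i - d (i + 1)
        else d i - d (i + 1) - 1)
      {d : ℕ → ℕ |
        (∀ i : ℕ, i < 1 ∨ 2 * s + 1 < i → d i = 0) ∧
        (∀ i : ℕ, 1 ≤ i → i ≤ s → d (2 * i) ≤ d (2 * i - 1)) ∧
        (∀ i : ℕ, 1 ≤ i → i ≤ s → d (2 * i + 1) + 1 ≤ d (2 * i)) ∧
        (∑ i ∈ Finset.Icc 1 (2 * s + 1), d i) = n}
      {d' : ℕ → ℕ |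
        (∀ i : ℕ, i < 1 ∨ 2 * s + 1 < i → d' i = 0) ∧
        (∑ i ∈ Finset.Icc 1 (2 * s + 1), i * d' i) + s ^ 2 + s = n} := by
  have hfe : (fun (d : ℕ → ℕ) (i : ℕ) =>
        if i < 1 ∨ 2 * s + 1 < i then 0
        else if i = 2 * s + 1 then d i
        else if i % 2 = 1 then d i - d (i + 1)
        else d i - d (i + 1) - 1) = stmt4f s := rfl
  rw [hfe]
  -- left inverse: g ∘ f = id on A
  have hleft : ∀ d : ℕ → ℕ, d ∈ {d : ℕ → ℕ |
        (∀ i : ℕ, i < 1 ∨ 2 * s + 1 < i → d i = 0) ∧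
        (∀ i : ℕ, 1 ≤ i → i ≤ s → d (2 * i) ≤ d (2 * i - 1)) ∧
        (∀ i : ℕ, 1 ≤ i → i ≤ s → d (2 * i + 1) + 1 ≤ d (2 * i)) ∧
        (∑ i ∈ Finset.Icc 1 (2 * s + 1), d i) = n} →
      stmt4g s (stmt4f s d) = d := by
    rintro d ⟨h1, h2, h3, _⟩
    funext i
    by_cases hr : i < 1 ∨ 2 * s + 1 < i
    · rw [stmt4g, if_pos hr, h1 i hr]
    · rw [stmt4g, if_neg hr]
      exact stmt4_left_aux s d h2 h3 (2 * s + 1 - i) i (by omega) (by omega)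
  -- right inverse: f ∘ g = id on B
  have hright : ∀ d' : ℕ → ℕ, d' ∈ {d' : ℕ → ℕ |
        (∀ i : ℕ, i < 1 ∨ 2 * s + 1 < i → d' i = 0) ∧
        (∑ i ∈ Finset.Icc 1 (2 * s + 1), i * d' i) + s ^ 2 + s = n} →
      stmt4f s (stmt4g s d') = d' := by
    rintro d' ⟨h1, _⟩
    funext i
    by_cases hr : i < 1 ∨ 2 * s + 1 < i
    · rw [stmt4f, if_pos hr, h1 i hr]
    · push_neg at hr
      by_cases htop : i = 2 * s + 1
      · subst htop
        rw [stmt4f, if_neg (by omega), if_pos rfl, stmt4g, if_neg (by omega),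
          Finset.Icc_self, Finset.sum_singleton]
        omega
      · have hle : i ≤ 2 * s := by omega
        have hg1 : stmt4g s d' i
            = d' i + (∑ j ∈ Finset.Icc (i + 1) (2 * s + 1), d' j) + (s + 1 - (i + 1) / 2) := by
          rw [stmt4g, if_neg (by omega), stmt4_sum_bot (by omega)]
        have hg2 : stmt4g s d' (i + 1)
            = (∑ j ∈ Finset.Icc (i + 1) (2 * s + 1), d' j) + (s + 1 - (i + 1 + 1) / 2) := by
          rw [stmt4g, if_neg (by omega)]
        rw [stmt4f, if_neg (by omega), if_neg htop, hg1, hg2]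
        by_cases hmod : i % 2 = 1
        · rw [if_pos hmod]; omega
        · rw [if_neg hmod]; omega
  refine Set.InvOn.bijOn ⟨hleft, hright⟩ ?_ ?_
  · -- MapsTo f A B
    rintro d ⟨h1, h2, h3, h4⟩
    constructor
    · intro i hi
      rw [stmt4f, if_pos hi]
    · have hsum : ∑ i ∈ Finset.Icc 1 (2 * s + 1), stmt4g s (stmt4f s d) i
          = ∑ i ∈ Finset.Icc 1 (2 * s + 1), d i := by
        rw [hleft d ⟨h1, h2, h3, h4⟩]
      rw [stmt4_sumg] at hsum
      omega
  · -- MapsTo g B A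
    rintro d' ⟨h1, h4⟩
    refine ⟨fun i hi => by rw [stmt4g, if_pos hi], ?_, ?_, ?_⟩
    · intro i hi1 his
      have e1 : stmt4g s d' (2 * i - 1)
          = d' (2 * i - 1) + (∑ j ∈ Finset.Icc (2 * i) (2 * s + 1), d' j)
            + (s + 1 - (2 * i - 1 + 1) / 2) := by
        rw [stmt4g, if_neg (by omega), stmt4_sum_bot (by omega),
          show 2 * i - 1 + 1 = 2 * i by omega]
      have e2 : stmt4g s d' (2 * i)
          = (∑ j ∈ Finset.Icc (2 * i) (2 * s + 1), d' j) + (s + 1 - (2 * i + 1) / 2) := by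
        rw [stmt4g, if_neg (by omega)]
      rw [e1, e2]; omega
    · intro i hi1 his
      have e1 : stmt4g s d' (2 * i)
          = d' (2 * i) + (∑ j ∈ Finset.Icc (2 * i + 1) (2 * s + 1), d' j)
            + (s + 1 - (2 * i + 1) / 2) := by
        rw [stmt4g, if_neg (by omega), stmt4_sum_bot (by omega)]
      have e2 : stmt4g s d' (2 * i + 1)
          = (∑ j ∈ Finset.Icc (2 * i + 1) (2 * s + 1), d' j)
            + (s + 1 - (2 * i + 1 + 1) / 2) := by
        rw [stmt4g, if_neg (by omega)]
      rw [e1, e2]; omega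
    · rw [stmt4_sumg]; omega
end

section
/- Define polynomials E(a,b) ∈ ℤ[t] for integers 0 ≤ a ≤ b by: E(0,0) = t+1; E(0,b) = t^{b+1} for b > 0; E(a,b) = t^{a+b−1}(t²−1) for a > 0. Fix integers s ≥ 1 and n ≥ 0, and let (d₁,…,d_{2s}) be a tuple of nonnegative integers with d_{2j} ≤ d_{2j−1} − 1 for 1 ≤ j ≤ s, d_{2j+1} ≤ d_{2j} for 1 ≤ j ≤ s−1, and d₁ + ⋯ + d_{2s} = n. Set d′_{2j−1} = d_{2j−1} − d_{2j} − 1 (1 ≤ j ≤ s), d′_{2j} = d_{2j} − d_{2j+1} (1 ≤ j ≤ s−1), d′_{2s} = d_{2s}; set N = Σ_{i=1}^{2s} i·d′ᵢ, ν = #{1 ≤ i ≤ 2s : d′ᵢ > 0}, and ν₋ = #{1 ≤ i ≤ 2s−1 : d′ᵢ > 0}. Define W(d) = [Π_{i=1}^{s−1} E(d_{2i−1}−d_{2i}−1, d_{2i−1}+d_{2i})·E(d_{2i}−d_{2i+1}, d_{2i}+d_{2i+1})] · E(d_{2s−1}−d_{2s}−1, d_{2s−1}+d_{2s}) · E(d_{2s},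 d_{2s}), where an empty product equals 1. Then in ℤ[t]: if d_{2s} > 0, W(d) = t^{2s²+s+2N−2ν}·(t²−1)^{ν}; and if d_{2s} = 0, W(d) = t^{2s²+s−1+2N−2ν₋}·(t²−1)^{ν₋}·(t+1). -/
open Polynomial

private lemma stmt5_pair_prod {M : Type*} [CommMonoid M] (G : ℕ → M) :
    ∀ m : ℕ, ∏ i ∈ Finset.Icc 1 m, (G (2*i-1) * G (2*i)) = ∏ i ∈ Finset.Icc 1 (2*m), G i := by
  intro m
  induction m with
  | zero => simp
  | succ m ih =>
    rw [Finset.prod_Icc_succ_top (by omega) (fun i => G (2*i-1) * G (2*i)), ih]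
    have e1 : 2*(m+1) = (2*m+1)+1 := by ring
    rw [e1, Finset.prod_Icc_succ_top (by omega), Finset.prod_Icc_succ_top (by omega)]
    have e3 : 2*m+1+1-1 = 2*m+1 := by omega
    rw [e3, mul_assoc]

private lemma stmt5_tel (f : ℕ → ℤ) :
    ∀ m : ℕ, ∑ i ∈ Finset.Icc 1 m, (i:ℤ) * (f i - f (i+1))
      = (∑ i ∈ Finset.Icc 1 m, f i) - (m:ℤ) * f (m+1) := by
  intro m
  induction m with
  | zero => simp
  | succ m ih =>
    rw [Finset.sum_Icc_succ_top (by omega), Finset.sum_Icc_succ_top (by omega), ih]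
    push_cast
    ring

private lemma stmt5_oddsum :
    ∀ m : ℕ, ∑ i ∈ Finset.Icc 1 (2*m), (if i % 2 = 1 then (i:ℤ) else 0) = (m:ℤ)^2 := by
  intro m
  induction m with
  | zero => simp
  | succ m ih =>
    have e1 : 2*(m+1) = (2*m+1)+1 := by ring
    rw [e1, Finset.sum_Icc_succ_top (by omega), Finset.sum_Icc_succ_top (by omega), ih]
    rw [if_pos (by omega : (2*m+1) % 2 = 1), if_neg (by omega : ¬ ((2*m+1+1) % 2 = 1))]
    push_cast
    ring

private lemma stmt5_evencount :
    ∀ m : ℕ, ∑ i ∈ Finset.Icc 1 (2*m+1), (if i % 2 = 0 then (1:ℕ) else 0) = m := by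
  intro m
  induction m with
  | zero => decide
  | succ m ih =>
    have e1 : 2*(m+1)+1 = ((2*m+1)+1)+1 := by ring
    rw [e1, Finset.sum_Icc_succ_top (by omega), Finset.sum_Icc_succ_top (by omega), ih]
    rw [if_pos (by omega : (2*m+1+1) % 2 = 0), if_neg (by omega : ¬ ((2*m+1+1+1) % 2 = 0))]

/-- the weight computation in the proof of Theorem 3.9 for
`a = 0`: the summand `W(d)` of the coefficient `B_{0,n}` in formula (3.7)
equals `t^{2s²+s+2N-2ν}(t²-1)^ν` if `d_{2s} > 0` and
`t^{2s²+s-1+2N-2νminus}(t²-1)^{νminus}(t+1)` if `d_{2s} = 0`.  The tuple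
`(d₁,…,d_{2s})` is encoded as a function `d : ℕ → ℕ` (only the values
`d 1, …, d (2*s)` matter). -/
theorem stmt5 (E : ℕ → ℕ → Polynomial ℤ)
    (hE1 : E 0 0 = X + 1)
    (hE2 : ∀ b : ℕ, 0 < b → E 0 b = X ^ (b + 1))
    (hE3 : ∀ a b : ℕ, 0 < a → a ≤ b → E a b = X ^ (a + b - 1) * (X ^ 2 - 1))
    (s n : ℕ) (hs : 1 ≤ s) (d : ℕ → ℕ)
    (hA1 : ∀ j : ℕ, 1 ≤ j → j ≤ s → d (2 * j) + 1 ≤ d (2 * j - 1))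
    (hA2 : ∀ j : ℕ, 1 ≤ j → j ≤ s - 1 → d (2 * j + 1) ≤ d (2 * j))
    (hA3 : (∑ i ∈ Finset.Icc 1 (2 * s), d i) = n)
    (d' : ℕ → ℕ)
    (hd' : ∀ i : ℕ, d' i =
      if i = 2 * s then d i
      else if i % 2 = 1 then d i - d (i + 1) - 1
      else d i - d (i + 1))
    (N ν νminus : ℕ)
    (hN : N = ∑ i ∈ Finset.Icc 1 (2 * s), i * d' i)
    (hν : ν = ((Finset.Icc 1 (2 * s)).filter fun i => 0 < d' i).card)
    (hνminus : νminus = ((Finset.Icc 1 (2 * s - 1)).filter fun i => 0 < d' i).card)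
    (W : Polynomial ℤ)
    (hW : W = (∏ i ∈ Finset.Icc 1 (s - 1),
        E (d (2 * i - 1) - d (2 * i) - 1) (d (2 * i - 1) + d (2 * i)) *
          E (d (2 * i) - d (2 * i + 1)) (d (2 * i) + d (2 * i + 1))) *
      E (d (2 * s - 1) - d (2 * s) - 1) (d (2 * s - 1) + d (2 * s)) *
      E (d (2 * s)) (d (2 * s))) :
    (0 < d (2 * s) →
      W = X ^ (2 * s ^ 2 + s + 2 * N - 2 * ν) * (X ^ 2 - 1) ^ ν) ∧
    (d (2 * s) = 0 →
      W = X ^ (2 * s ^ 2 + s - 1 + 2 * N - 2 * νminus) * (X ^ 2 - 1) ^ νminus * (X + 1)) := by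
  -- step inequalities
  have hodd : ∀ i, 1 ≤ i → i ≤ 2*s - 1 → i % 2 = 1 → d (i+1) + 1 ≤ d i := by
    intro i h1 h2 h3
    have h := hA1 ((i+1)/2) (by omega) (by omega)
    have e1 : 2 * ((i+1)/2) = i + 1 := by omega
    rw [e1] at h
    simpa using h
  have heven : ∀ i, 1 ≤ i → i ≤ 2*s - 1 → i % 2 = 0 → d (i+1) ≤ d i := by
    intro i h1 h2 h3
    have h := hA2 (i/2) (by omega) (by omega)
    have e1 : 2 * (i/2) = i := by omega
    rw [e1] at h
    exact h
  have hdpos : ∀ i, 1 ≤ i → i ≤ 2*s - 1 → 1 ≤ d i := by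
    intro i h1 h2
    rcases Nat.even_or_odd i with he | ho
    · have h3 : i % 2 = 0 := Nat.even_iff.mp he
      have ha := heven i h1 h2 h3
      have hb := hodd (i+1) (by omega) (by omega) (by omega)
      omega
    · have h3 : i % 2 = 1 := Nat.odd_iff.mp ho
      have := hodd i h1 h2 h3
      omega
  -- rewrite W as a product over Icc 1 (2s-1) times the last factor
  have hW2 : W = (∏ i ∈ Finset.Icc 1 (2*s-1), E (d' i) (d i + d (i+1))) * E (d (2*s)) (d (2*s)) := by
    rw [hW]
    congr 1
    have hp : (∏ i ∈ Finset.Icc 1 (s-1),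
          E (d (2*i-1) - d (2*i) - 1) (d (2*i-1) + d (2*i)) *
            E (d (2*i) - d (2*i+1)) (d (2*i) + d (2*i+1)))
        = ∏ i ∈ Finset.Icc 1 (2*(s-1)), E (d' i) (d i + d (i+1)) := by
      rw [← stmt5_pair_prod (fun i => E (d' i) (d i + d (i+1))) (s-1)]
      refine Finset.prod_congr rfl fun i hi => ?_
      simp only [Finset.mem_Icc] at hi
      have e1 : 2*i - 1 + 1 = 2*i := by omega
      have h1 : d' (2*i-1) = d (2*i-1) - d (2*i) - 1 := by
        rw [hd', if_neg (by omega : ¬ (2*i-1 = 2*s)), if_pos (by omega : (2*i-1) % 2 = 1), e1]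
      have h2 : d' (2*i) = d (2*i) - d (2*i+1) := by
        rw [hd', if_neg (by omega : ¬ (2*i = 2*s)), if_neg (by omega : ¬ ((2*i) % 2 = 1))]
      simp only [h1, h2, e1]
    have e2 : 2*s - 1 = (2*(s-1)) + 1 := by omega
    rw [hp, e2, Finset.prod_Icc_succ_top (by omega)]
    congr 1
    have e3 : 2*(s-1)+1 = 2*s-1 := by omega
    rw [e3]
    have e4 : 2*s-1+1 = 2*s := by omega
    rw [e4, hd', if_neg (by omega : ¬ (2*s-1 = 2*s)), if_pos (by omega : (2*s-1) % 2 = 1), e4]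
  -- each factor
  have hfac : ∀ i ∈ Finset.Icc 1 (2*s-1),
      E (d' i) (d i + d (i+1)) =
        X ^ (2 * d i + (if i % 2 = 0 then 1 else 0) - 2 * (if 0 < d' i then 1 else 0)) *
          (X^2 - 1) ^ (if 0 < d' i then 1 else 0) := by
    intro i hi
    simp only [Finset.mem_Icc] at hi
    have hne : ¬ (i = 2*s) := by omega
    have hdi := hdpos i hi.1 hi.2
    have hd'i := hd' i
    rw [if_neg hne] at hd'i
    rcases Nat.even_or_odd i with he | ho
    · have hp0 : i % 2 = 0 := Nat.even_iff.mp he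
      rw [if_neg (by omega : ¬ (i % 2 = 1))] at hd'i
      have hst := heven i hi.1 hi.2 hp0
      by_cases hci : 0 < d' i
      · rw [if_pos hp0, if_pos hci, hE3 _ _ hci (by omega), pow_one,
          show d' i + (d i + d (i+1)) - 1 = 2 * d i + 1 - 2 * 1 from by omega]
      · have h0 : d' i = 0 := by omega
        rw [if_pos hp0, if_neg hci, h0, hE2 _ (by omega), pow_zero, mul_one,
          show d i + d (i+1) + 1 = 2 * d i + 1 - 2 * 0 from by omega]
    · have hp1 : i % 2 = 1 := Nat.odd_iff.mp ho
      rw [if_pos hp1] at hd'i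
      have hst := hodd i hi.1 hi.2 hp1
      by_cases hci : 0 < d' i
      · rw [if_neg (by omega : ¬ (i % 2 = 0)), if_pos hci, hE3 _ _ hci (by omega), pow_one,
          show d' i + (d i + d (i+1)) - 1 = 2 * d i + 0 - 2 * 1 from by omega]
      · have h0 : d' i = 0 := by omega
        rw [if_neg (by omega : ¬ (i % 2 = 0)), if_neg hci, h0, hE2 _ (by omega), pow_zero, mul_one,
          show d i + d (i+1) + 1 = 2 * d i + 0 - 2 * 0 from by omega]
  have hprod : (∏ i ∈ Finset.Icc 1 (2*s-1), E (d' i) (d i + d (i+1)))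
      = X ^ (∑ i ∈ Finset.Icc 1 (2*s-1),
            (2 * d i + (if i % 2 = 0 then 1 else 0) - 2 * (if 0 < d' i then 1 else 0)))
        * (X^2 - 1) ^ (∑ i ∈ Finset.Icc 1 (2*s-1), (if 0 < d' i then (1:ℕ) else 0)) := by
    rw [← Finset.prod_pow_eq_pow_sum, ← Finset.prod_pow_eq_pow_sum, ← Finset.prod_mul_distrib]
    exact Finset.prod_congr rfl hfac
  have hsumc : (∑ i ∈ Finset.Icc 1 (2*s-1), (if 0 < d' i then (1:ℕ) else 0)) = νminus := by
    rw [hνminus, Finset.card_filter]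
  have hsplit : (∑ i ∈ Finset.Icc 1 (2*s-1), d i) + d (2*s) = n := by
    rw [← hA3]
    have e : Finset.Icc 1 (2*s) = Finset.Icc 1 ((2*s-1)+1) := by congr 1; omega
    rw [e, Finset.sum_Icc_succ_top (by omega)]
    have e2 : 2*s-1+1 = 2*s := by omega
    rw [e2]
  -- sum of exponents
  have hsum1 : (∑ i ∈ Finset.Icc 1 (2*s-1),
        (2 * d i + (if i % 2 = 0 then 1 else 0) - 2 * (if 0 < d' i then 1 else 0)))
      + 2 * νminus = 2 * (∑ i ∈ Finset.Icc 1 (2*s-1), d i) + (s - 1) := by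
    have hpt : ∀ i ∈ Finset.Icc 1 (2*s-1),
        (2 * d i + (if i % 2 = 0 then 1 else 0) - 2 * (if 0 < d' i then 1 else 0))
          + 2 * (if 0 < d' i then (1:ℕ) else 0)
        = 2 * d i + (if i % 2 = 0 then 1 else 0) := by
      intro i hi
      simp only [Finset.mem_Icc] at hi
      have hdi := hdpos i hi.1 hi.2
      by_cases hci : 0 < d' i <;> by_cases hp : i % 2 = 0 <;> simp [hci, hp] <;> omega
    have h1 := Finset.sum_congr rfl hpt
    rw [Finset.sum_add_distrib, Finset.sum_add_distrib] at h1
    rw [← Finset.mul_sum, ← Finset.mul_sum] at h1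
    have h2 : (∑ i ∈ Finset.Icc 1 (2*s-1), (if i % 2 = 0 then (1:ℕ) else 0)) = s - 1 := by
      have eI : Finset.Icc 1 (2*s-1) = Finset.Icc 1 (2*(s-1)+1) := by congr 1; omega
      rw [eI, stmt5_evencount]
    rw [← hsumc]
    omega
  -- telescoping for N
  have hNZ : (N:ℤ) = (n:ℤ) - (s:ℤ)^2 := by
    have hcast : (N:ℤ) = ∑ i ∈ Finset.Icc 1 (2*s), (i:ℤ) * (d' i : ℤ) := by
      rw [hN]
      push_cast
      rfl
    have hpt : ∀ i ∈ Finset.Icc 1 (2*s),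
        (i:ℤ) * (d' i : ℤ) =
          (i:ℤ) * ((if i ≤ 2*s then (d i:ℤ) else 0) - (if i+1 ≤ 2*s then (d (i+1):ℤ) else 0))
            - (if i % 2 = 1 then (i:ℤ) else 0) := by
      intro i hi
      simp only [Finset.mem_Icc] at hi
      by_cases h2s : i = 2*s
      · subst h2s
        have hd'i := hd' (2*s)
        rw [if_pos rfl] at hd'i
        rw [hd'i, if_pos (le_refl (2*s)), if_neg (by omega : ¬ (2*s+1 ≤ 2*s)),
          if_neg (by omega : ¬ ((2*s) % 2 = 1))]
        ring
      · have hi2 : i ≤ 2*s - 1 := by omega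
        have hd'i := hd' i
        rw [if_neg h2s] at hd'i
        rw [if_pos hi.2, if_pos (by omega : i+1 ≤ 2*s)]
        by_cases hp : i % 2 = 1
        · rw [if_pos hp] at hd'i
          rw [if_pos hp]
          have hst := hodd i hi.1 hi2 hp
          have hz : (d' i : ℤ) = (d i:ℤ) - (d (i+1):ℤ) - 1 := by omega
          rw [hz]
          ring
        · rw [if_neg hp] at hd'i
          rw [if_neg hp]
          have hst := heven i hi.1 hi2 (by omega)
          have hz : (d' i : ℤ) = (d i:ℤ) - (d (i+1):ℤ) := by omega
          rw [hz]
          ring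
    rw [hcast, Finset.sum_congr rfl hpt, Finset.sum_sub_distrib,
      stmt5_tel (fun i => if i ≤ 2*s then (d i:ℤ) else 0) (2*s), stmt5_oddsum]
    have hf1 : (if 2*s+1 ≤ 2*s then ((d (2*s+1)):ℤ) else 0) = 0 := if_neg (by omega)
    have hf2 : (∑ i ∈ Finset.Icc 1 (2*s), (if i ≤ 2*s then (d i:ℤ) else 0))
        = ∑ i ∈ Finset.Icc 1 (2*s), ((d i:ℤ)) :=
      Finset.sum_congr rfl fun i hi => if_pos (Finset.mem_Icc.mp hi).2
    have hf3 : (∑ i ∈ Finset.Icc 1 (2*s), ((d i:ℤ))) = (n:ℤ) := by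
      rw [← hA3]
      push_cast
      rfl
    rw [hf1, hf2, hf3]
    ring
  have hNn : N + s^2 = n := by
    have h1 : ((N + s^2 : ℕ):ℤ) = (n:ℤ) := by
      push_cast
      rw [hNZ]
      ring
    exact_mod_cast h1
  have hd'last : d' (2*s) = d (2*s) := by rw [hd', if_pos rfl]
  have hνsplit : ν = νminus + (if 0 < d' (2*s) then 1 else 0) := by
    rw [hν, hνminus, Finset.card_filter, Finset.card_filter]
    have e : Finset.Icc 1 (2*s) = Finset.Icc 1 ((2*s-1)+1) := by congr 1; omega
    rw [e, Finset.sum_Icc_succ_top (by omega)]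
    have e2 : 2*s-1+1 = 2*s := by omega
    rw [e2]
  constructor
  · intro hpos
    have hc1 : 0 < d' (2*s) := by rw [hd'last]; exact hpos
    have hν1 : ν = νminus + 1 := by rw [hνsplit, if_pos hc1]
    have hexp : (∑ i ∈ Finset.Icc 1 (2*s-1),
          (2 * d i + (if i % 2 = 0 then 1 else 0) - 2 * (if 0 < d' i then 1 else 0)))
        + (d (2*s) + d (2*s) - 1) = 2 * s ^ 2 + s + 2 * N - 2 * ν := by
      obtain ⟨q, hq⟩ : ∃ q, s^2 = q := ⟨_, rfl⟩
      rw [hq] at hNn ⊢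
      omega
    rw [hW2, hprod, hsumc, hE3 _ _ hpos le_rfl, ← hexp, hν1, pow_add, pow_succ]
    ring
  · intro h0
    have hexp : (∑ i ∈ Finset.Icc 1 (2*s-1),
          (2 * d i + (if i % 2 = 0 then 1 else 0) - 2 * (if 0 < d' i then 1 else 0)))
        = 2 * s ^ 2 + s - 1 + 2 * N - 2 * νminus := by
      obtain ⟨q, hq⟩ : ∃ q, s^2 = q := ⟨_, rfl⟩
      rw [hq] at hNn ⊢
      omega
    rw [hW2, hprod, hsumc, h0, hE1, ← hexp]
end

section
/- Define polynomials E(a,b) ∈ ℤ[t] for integers 0 ≤ a ≤ b by: E(0,0) = t+1; E(0,b) = t^{b+1} for b > 0; E(a,b) = t^{a+b−1}(t²−1) for a > 0. Fix integers s ≥ 0 and n ≥ 0, and let (d₁,…,d_{2s+1}) be a tuple of nonnegative integers with d_{2i} ≤ d_{2i−1} for 1 ≤ i ≤ s, d_{2i+1} ≤ d_{2i} − 1 for 1 ≤ i ≤ s, and d₁ + ⋯ + d_{2s+1} = n. Set d′_{2i−1} = d_{2i−1} − d_{2i} (1 ≤ i ≤ s), d′_{2i} = d_{2i} − d_{2i+1}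 − 1 (1 ≤ i ≤ s), d′_{2s+1} = d_{2s+1}; set N = Σ_{i=1}^{2s+1} i·d′ᵢ, ν = #{1 ≤ i ≤ 2s+1 : d′ᵢ > 0}, and ν₋ = #{1 ≤ i ≤ 2s : d′ᵢ > 0}. Define W′(d) = [Π_{i=1}^{s} E(d_{2i−1}−d_{2i}, d_{2i−1}+d_{2i})·E(d_{2i}−d_{2i+1}−1, d_{2i}+d_{2i+1})] · E(d_{2s+1}, d_{2s+1}), where an empty product equals 1. Then in ℤ[t]: if d_{2s+1} > 0, W′(d) = t^{2s²+3s+1+2N−2ν}·(t²−1)^{ν}; and if d_{2s+1} = 0, W′(d) = t^{2s²+3s+2N−2ν₋}·(t²−1)^{ν₋}·(t+1). -/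
open Polynomial Finset

private lemma pair_sum6 (f : ℕ → ℕ) (s : ℕ) :
    ∑ i ∈ Icc 1 (2 * s), f i = ∑ k ∈ Icc 1 s, (f (2 * k - 1) + f (2 * k)) := by
  induction s with
  | zero => simp
  | succ s ih =>
    have h2 : 2 * (s + 1) = 2 * s + 1 + 1 := by ring
    rw [h2, Finset.sum_Icc_succ_top (by omega) f, Finset.sum_Icc_succ_top (by omega) f,
      Finset.sum_Icc_succ_top (by omega), ih,
      show 2 * (s + 1) - 1 = 2 * s + 1 by omega, h2]
    ring

private lemma tele6 (d : ℕ → ℕ) : ∀ s : ℕ,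
    (∀ k, 1 ≤ k → k ≤ s → d (2 * k) ≤ d (2 * k - 1)) →
    (∀ k, 1 ≤ k → k ≤ s → d (2 * k + 1) + 1 ≤ d (2 * k)) →
    (∑ k ∈ Icc 1 s, ((2 * k - 1) * (d (2 * k - 1) - d (2 * k)) +
        2 * k * (d (2 * k) - d (2 * k + 1) - 1))) +
      (2 * s + 1) * d (2 * s + 1) + s * (s + 1) =
    ∑ i ∈ Icc 1 (2 * s + 1), d i := by
  intro s
  induction s with
  | zero => intro _ _; simp
  | succ s ih =>
    intro h1 h2
    have ih' := ih (fun k hk1 hk2 => h1 k hk1 (by omega)) (fun k hk1 hk2 => h2 k hk1 (by omega))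
    have e1 : d (2 * s + 2) ≤ d (2 * s + 1) := by
      have := h1 (s + 1) (by omega) le_rfl
      simpa [show 2 * (s + 1) = 2 * s + 2 by ring, show 2 * (s + 1) - 1 = 2 * s + 1 by omega]
        using this
    have e2 : d (2 * s + 3) + 1 ≤ d (2 * s + 2) := by
      have := h2 (s + 1) (by omega) le_rfl
      simpa [show 2 * (s + 1) = 2 * s + 2 by ring, show 2 * (s + 1) + 1 = 2 * s + 3 by ring]
        using this
    rw [Finset.sum_Icc_succ_top (show 1 ≤ s + 1 by omega),
      show 2 * (s + 1) + 1 = 2 * s + 1 + 1 + 1 by ring,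
      Finset.sum_Icc_succ_top (show 1 ≤ 2 * s + 1 + 1 + 1 by omega) d,
      Finset.sum_Icc_succ_top (show 1 ≤ 2 * s + 1 + 1 by omega) d,
      show 2 * (s + 1) - 1 = 2 * s + 1 by omega,
      show 2 * (s + 1) = 2 * s + 1 + 1 by ring,
      show 2 * s + 1 + 1 + 1 = 2 * s + 3 by ring,
      show 2 * s + 1 + 1 = 2 * s + 2 by ring]
    have e2' : d (2 * s + 3) ≤ d (2 * s + 2) := by omega
    have e2'' : 1 ≤ d (2 * s + 2) - d (2 * s + 3) := by omega
    have e1' : d (2 * s + 2) ≤ d (2 * s + 1) := e1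
    zify [e1', e2', e2''] at *
    linear_combination ih'

/-- the weight computation in the proof of Theorem 3.9 for
`a = 1`: the summand `W′(d)` of the coefficient `B_{1,n}` in formula (3.8)
equals `t^{2s²+3s+1+2N-2ν}(t²-1)^ν` if `d_{2s+1} > 0` and
`t^{2s²+3s+2N-2ν₋}(t²-1)^{ν₋}(t+1)` if `d_{2s+1} = 0`.  The tuple
`(d₁,…,d_{2s+1})` is encoded as a function `d : ℕ → ℕ` (only the values
`d 1, …, d (2*s+1)` matter). -/
theorem stmt6 (E : ℕ → ℕ → Polynomial ℤ)
    (hE1 : E 0 0 = X + 1)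
    (hE2 : ∀ b : ℕ, 0 < b → E 0 b = X ^ (b + 1))
    (hE3 : ∀ a b : ℕ, 0 < a → a ≤ b → E a b = X ^ (a + b - 1) * (X ^ 2 - 1))
    (s n : ℕ) (d : ℕ → ℕ)
    (hA1 : ∀ i : ℕ, 1 ≤ i → i ≤ s → d (2 * i) ≤ d (2 * i - 1))
    (hA2 : ∀ i : ℕ, 1 ≤ i → i ≤ s → d (2 * i + 1) + 1 ≤ d (2 * i))
    (hA3 : (∑ i ∈ Finset.Icc 1 (2 * s + 1), d i) = n)
    (d' : ℕ → ℕ)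
    (hd' : ∀ i : ℕ, d' i =
      if i = 2 * s + 1 then d i
      else if i % 2 = 1 then d i - d (i + 1)
      else d i - d (i + 1) - 1)
    (N ν νminus : ℕ)
    (hN : N = ∑ i ∈ Finset.Icc 1 (2 * s + 1), i * d' i)
    (hν : ν = ((Finset.Icc 1 (2 * s + 1)).filter fun i => 0 < d' i).card)
    (hνminus : νminus = ((Finset.Icc 1 (2 * s)).filter fun i => 0 < d' i).card)
    (W : Polynomial ℤ)
    (hW : W = (∏ i ∈ Finset.Icc 1 s,
        E (d (2 * i - 1) - d (2 * i)) (d (2 * i - 1) + d (2 * i)) *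
          E (d (2 * i) - d (2 * i + 1) - 1) (d (2 * i) + d (2 * i + 1))) *
      E (d (2 * s + 1)) (d (2 * s + 1))) :
    (0 < d (2 * s + 1) →
      W = X ^ (2 * s ^ 2 + 3 * s + 1 + 2 * N - 2 * ν) * (X ^ 2 - 1) ^ ν) ∧
    (d (2 * s + 1) = 0 →
      W = X ^ (2 * s ^ 2 + 3 * s + 2 * N - 2 * νminus) * (X ^ 2 - 1) ^ νminus * (X + 1)) := by
  -- indicator function
  set I : ℕ → ℕ := fun i => if 0 < d' i then 1 else 0 with hI
  -- d' values at odd/even indices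
  have hdo : ∀ k, 1 ≤ k → k ≤ s → d' (2 * k - 1) = d (2 * k - 1) - d (2 * k) := by
    intro k hk1 hk2
    rw [hd', if_neg (by omega), if_pos (by omega), show 2 * k - 1 + 1 = 2 * k by omega]
  have hde : ∀ k, 1 ≤ k → k ≤ s → d' (2 * k) = d (2 * k) - d (2 * k + 1) - 1 := by
    intro k hk1 hk2
    rw [hd', if_neg (by omega), if_neg (by omega)]
  have hdlast : d' (2 * s + 1) = d (2 * s + 1) := by rw [hd', if_pos rfl]
  -- per-factor computation
  have hfac : ∀ k ∈ Icc 1 s,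
      E (d (2 * k - 1) - d (2 * k)) (d (2 * k - 1) + d (2 * k)) *
        E (d (2 * k) - d (2 * k + 1) - 1) (d (2 * k) + d (2 * k + 1)) =
      X ^ ((2 * d (2 * k - 1) + 1 - 2 * I (2 * k - 1)) + (2 * d (2 * k) - 2 * I (2 * k))) *
        (X ^ 2 - 1) ^ (I (2 * k - 1) + I (2 * k)) := by
    intro k hk
    simp only [Finset.mem_Icc] at hk
    have hk1 := hA1 k hk.1 hk.2
    have hk2 := hA2 k hk.1 hk.2
    simp only [hI, hdo k hk.1 hk.2, hde k hk.1 hk.2]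
    by_cases h1 : 0 < d (2 * k - 1) - d (2 * k) <;>
      by_cases h2 : 0 < d (2 * k) - d (2 * k + 1) - 1
    · rw [if_pos h1, if_pos h2, hE3 _ _ h1 (by omega), hE3 _ _ h2 (by omega),
        show d (2 * k - 1) - d (2 * k) + (d (2 * k - 1) + d (2 * k)) - 1
          = 2 * d (2 * k - 1) + 1 - 2 * 1 by omega,
        show d (2 * k) - d (2 * k + 1) - 1 + (d (2 * k) + d (2 * k + 1)) - 1
          = 2 * d (2 * k) - 2 * 1 by omega]
      ring
    · rw [if_pos h1, if_neg h2, hE3 _ _ h1 (by omega),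
        show d (2 * k) - d (2 * k + 1) - 1 = 0 by omega, hE2 _ (by omega),
        show d (2 * k - 1) - d (2 * k) + (d (2 * k - 1) + d (2 * k)) - 1
          = 2 * d (2 * k - 1) + 1 - 2 * 1 by omega,
        show d (2 * k) + d (2 * k + 1) + 1 = 2 * d (2 * k) - 2 * 0 by omega]
      ring
    · rw [if_neg h1, if_pos h2,
        show d (2 * k - 1) - d (2 * k) = 0 by omega, hE2 _ (by omega),
        hE3 _ _ h2 (by omega),
        show d (2 * k - 1) + d (2 * k) + 1 = 2 * d (2 * k - 1) + 1 - 2 * 0 by omega,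
        show d (2 * k) - d (2 * k + 1) - 1 + (d (2 * k) + d (2 * k + 1)) - 1
          = 2 * d (2 * k) - 2 * 1 by omega]
      ring
    · rw [if_neg h1, if_neg h2,
        show d (2 * k - 1) - d (2 * k) = 0 by omega, hE2 _ (by omega),
        show d (2 * k) - d (2 * k + 1) - 1 = 0 by omega, hE2 _ (by omega),
        show d (2 * k - 1) + d (2 * k) + 1 = 2 * d (2 * k - 1) + 1 - 2 * 0 by omega,
        show d (2 * k) + d (2 * k + 1) + 1 = 2 * d (2 * k) - 2 * 0 by omega]
      ring
  -- the product
  have hprod : (∏ i ∈ Finset.Icc 1 s,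
        E (d (2 * i - 1) - d (2 * i)) (d (2 * i - 1) + d (2 * i)) *
          E (d (2 * i) - d (2 * i + 1) - 1) (d (2 * i) + d (2 * i + 1))) =
      X ^ (∑ k ∈ Icc 1 s, ((2 * d (2 * k - 1) + 1 - 2 * I (2 * k - 1)) +
            (2 * d (2 * k) - 2 * I (2 * k)))) *
        (X ^ 2 - 1) ^ (∑ k ∈ Icc 1 s, (I (2 * k - 1) + I (2 * k))) := by
    rw [Finset.prod_congr rfl hfac, Finset.prod_mul_distrib,
      Finset.prod_pow_eq_pow_sum, Finset.prod_pow_eq_pow_sum]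
  -- abbreviations
  set B := ∑ k ∈ Icc 1 s, (I (2 * k - 1) + I (2 * k)) with hB
  set C := ∑ k ∈ Icc 1 s, ((2 * d (2 * k - 1) + 1 - 2 * I (2 * k - 1)) +
      (2 * d (2 * k) - 2 * I (2 * k))) with hC
  set m := ∑ i ∈ Icc 1 (2 * s), d i with hm
  -- νminus = B
  have hBν : νminus = B := by
    rw [hνminus, Finset.card_filter, pair_sum6 (fun i => if 0 < d' i then 1 else 0) s, hB]
  -- ν = B + I (2s+1)
  have hνB : ν = B + I (2 * s + 1) := by
    rw [hν, Finset.card_filter, Finset.sum_Icc_succ_top (show 1 ≤ 2 * s + 1 by omega),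
      pair_sum6 (fun i => if 0 < d' i then 1 else 0) s, hB, hI]
  -- C + 2B = 2m + s
  have hCB : C + 2 * B = 2 * m + s := by
    rw [hC, hB, Finset.mul_sum, ← Finset.sum_add_distrib, hm, pair_sum6 d s]
    have key : ∀ k ∈ Icc 1 s,
        ((2 * d (2 * k - 1) + 1 - 2 * I (2 * k - 1)) + (2 * d (2 * k) - 2 * I (2 * k))) +
          2 * (I (2 * k - 1) + I (2 * k)) = 2 * (d (2 * k - 1) + d (2 * k)) + 1 := by
      intro k hk
      simp only [Finset.mem_Icc] at hk
      have hk1 := hA1 k hk.1 hk.2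
      have hk2 := hA2 k hk.1 hk.2
      have b1 : I (2 * k - 1) ≤ 1 := by simp only [hI]; split <;> omega
      have b2 : I (2 * k) ≤ 1 := by simp only [hI]; split <;> omega
      omega
    rw [Finset.sum_congr rfl key, Finset.sum_add_distrib, ← Finset.mul_sum,
      Finset.sum_const, Nat.card_Icc, smul_eq_mul, mul_one]
    omega
  -- m + d (2s+1) = n
  have hmn : m + d (2 * s + 1) = n := by
    rw [hm, ← hA3, Finset.sum_Icc_succ_top (show 1 ≤ 2 * s + 1 by omega)]
  -- N + s*(s+1) = n
  have hNn : N + s * (s + 1) = n := by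
    have tl := tele6 d s hA1 hA2
    have hNr : N = (∑ k ∈ Icc 1 s, ((2 * k - 1) * (d (2 * k - 1) - d (2 * k)) +
        2 * k * (d (2 * k) - d (2 * k + 1) - 1))) + (2 * s + 1) * d (2 * s + 1) := by
      rw [hN, Finset.sum_Icc_succ_top (show 1 ≤ 2 * s + 1 by omega), hdlast,
        pair_sum6 (fun i => i * d' i) s]
      congr 1
      refine Finset.sum_congr rfl fun k hk => ?_
      simp only [Finset.mem_Icc] at hk
      rw [hdo k hk.1 hk.2, hde k hk.1 hk.2]
    rw [hNr, ← hA3]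
    exact tl
  -- generalize s*s
  have hsq : (2 : ℕ) * s ^ 2 = 2 * (s * s) := by ring
  have hmul : s * (s + 1) = s * s + s := by ring
  rw [hmul] at hNn
  constructor
  · intro hpos
    have hIl : I (2 * s + 1) = 1 := by simp only [hI, hdlast]; rw [if_pos hpos]
    have hlast : E (d (2 * s + 1)) (d (2 * s + 1)) =
        X ^ (2 * d (2 * s + 1) - 1) * (X ^ 2 - 1) := by
      rw [hE3 _ _ hpos le_rfl]
      congr 2
      omega
    rw [hW, hprod, hlast, hνB, hIl]
    have hexp : 2 * s ^ 2 + 3 * s + 1 + 2 * N - 2 * (B + 1) = C + (2 * d (2 * s + 1) - 1) := by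
      rw [hsq]
      obtain ⟨q, hq⟩ : ∃ q, s * s = q := ⟨_, rfl⟩
      rw [hq] at hNn ⊢
      omega
    rw [hexp, pow_add]
    ring
  · intro h0
    have hlast : E (d (2 * s + 1)) (d (2 * s + 1)) = X + 1 := by rw [h0, hE1]
    rw [hW, hprod, hlast, hBν]
    have hexp : 2 * s ^ 2 + 3 * s + 2 * N - 2 * B = C := by
      rw [hsq]
      obtain ⟨q, hq⟩ : ∃ q, s * s = q := ⟨_, rfl⟩
      rw [hq] at hNn ⊢
      omega
    rw [hexp]
end

section
/- Let R be a commutative ring, let c ∈ R, and let m ≥ 1 be an integer. For each n ≥ 0 let c_n = Σ (1−c)^{#{1 ≤ i ≤ m : dᵢ > 0}}, the (finite) sum taken over all tuples (d₁,…,d_m) of nonnegative integers with Σ_{i=1}^{m} i·dᵢ = n. Then in the formal power series ring R[[u]]: (Σ_{n≥0} c_n u^n) · Π_{j=1}^{m} (1 − u^j) = Π_{j=1}^{m} (1 − c·u^j). -/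
open Finset PowerSeries

noncomputable def gg (R : Type) [CommRing R] (c : R) (j : ℕ) : PowerSeries R :=
  PowerSeries.mk fun n => if n = 0 then 1 else if j ∣ n then 1 - c else 0

lemma gg_mul (R : Type) [CommRing R] (c : R) (j : ℕ) (hj : 1 ≤ j) :
    gg R c j * (1 - (PowerSeries.X : PowerSeries R) ^ j)
      = 1 - PowerSeries.C (R := R) c * PowerSeries.X ^ j := by
  ext n
  rw [mul_sub, mul_one]
  simp only [gg, map_sub, PowerSeries.coeff_mk, PowerSeries.coeff_mul_X_pow',
    PowerSeries.coeff_one, PowerSeries.coeff_C]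
  by_cases h0 : n = 0
  · subst h0
    have h1 : ¬ j ≤ 0 := by omega
    have h2 : ¬ (0 : ℕ) = j := by omega
    simp only [if_pos rfl, if_neg h1, if_neg h2, sub_zero, mul_zero]
    simp
  · by_cases hnj : n = j
    · subst hnj
      simp [h0]
    · by_cases hle : j ≤ n
      · have hne : n - j ≠ 0 := by omega
        have hdvd : j ∣ n - j ↔ j ∣ n := by
          constructor
          · intro h; have := Nat.dvd_add h (dvd_refl j); rwa [Nat.sub_add_cancel hle] at this
          · intro h; exact Nat.dvd_sub h (dvd_refl j)
        by_cases hd : j ∣ n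
        · simp [h0, hnj, hle, hne, hd, hdvd.mpr hd]
        · simp only [if_neg h0, if_neg hne, if_pos hle, if_neg hd, if_neg (fun h => hd (hdvd.mp h)),
            if_neg hnj, mul_zero, sub_zero]
      · have hnd : ¬ j ∣ n := fun h => hle (Nat.le_of_dvd (Nat.pos_of_ne_zero h0) h)
        simp [h0, hnj, hle, hnd]

lemma prod_Icc_one (M : Type*) [CommMonoid M] (m : ℕ) (f : ℕ → M) :
    ∏ j ∈ Finset.Icc 1 m, f j = ∏ i : Fin m, f (i.1 + 1) := by
  rw [Fin.prod_univ_eq_prod_range (fun i => f (i + 1)) m]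
  apply Finset.prod_nbij' (i := fun j => j - 1) (j := fun i => i + 1)
  · intro a ha; simp at ha ⊢; omega
  · intro a ha; simp at ha ⊢; omega
  · intro a ha; simp at ha ⊢; omega
  · intro a ha; simp at ha ⊢
  · intro a ha
    have ha2 : 1 ≤ a := by simp at ha; omega
    show f a = f (a - 1 + 1)
    congr 1; omega

lemma sum_Icc_one (M : Type*) [AddCommMonoid M] (m : ℕ) (f : ℕ → M) :
    ∑ j ∈ Finset.Icc 1 m, f j = ∑ i : Fin m, f (i.1 + 1) := by
  rw [Fin.sum_univ_eq_sum_range (fun i => f (i + 1)) m]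
  apply Finset.sum_nbij' (i := fun j => j - 1) (j := fun i => i + 1)
  · intro a ha; simp at ha ⊢; omega
  · intro a ha; simp at ha ⊢; omega
  · intro a ha; simp at ha ⊢; omega
  · intro a ha; simp at ha ⊢
  · intro a ha
    have ha2 : 1 ≤ a := by simp at ha; omega
    show f a = f (a - 1 + 1)
    congr 1; omega

/-- the resummation identity: if
`cₙ = Σ_{(d₁,…,d_m), Σ i·dᵢ = n} (1-c)^{#{i : dᵢ > 0}}`, then
`(Σ cₙ uⁿ)·Π_{j=1}^m (1-uʲ) = Π_{j=1}^m (1-c·uʲ)` in `R[[u]]`.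
A tuple `(d₁,…,d_m)` is encoded as `d : Fin m → ℕ`, with `d i` the `(i+1)`-st
entry; since `Σ (i+1)·dᵢ = n` forces every entry to be at most `n`, the tuples
form the finite set carved out of `Fin m → Finset.range (n+1)`. -/
theorem stmt7 (R : Type) [CommRing R] (c : R) (m : ℕ) (hm : 1 ≤ m)
    (cn : ℕ → R)
    (hcn : ∀ n : ℕ, cn n =
      ∑ d ∈ (Fintype.piFinset fun _ : Fin m => Finset.range (n + 1)).filter
          (fun d : Fin m → ℕ => ∑ i : Fin m, (i.1 + 1) * d i = n),
        (1 - c) ^ (Finset.univ.filter fun i : Fin m => 0 < d i).card) :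
    PowerSeries.mk cn * ∏ j ∈ Finset.Icc 1 m, (1 - (PowerSeries.X : PowerSeries R) ^ j)
      = ∏ j ∈ Finset.Icc 1 m, (1 - PowerSeries.C (R := R) c * PowerSeries.X ^ j) := by
  classical
  have key : PowerSeries.mk cn = ∏ j ∈ Finset.Icc 1 m, gg R c j := by
    ext n
    rw [PowerSeries.coeff_mk, hcn, PowerSeries.coeff_prod]
    -- restrict to divisible tuples
    have hstep : ∑ l ∈ finsuppAntidiag (Finset.Icc 1 m) n,
          ∏ i ∈ Finset.Icc 1 m, (PowerSeries.coeff (l i)) (gg R c i)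
        = ∑ l ∈ (finsuppAntidiag (Finset.Icc 1 m) n).filter
            (fun l : ℕ →₀ ℕ => ∀ j ∈ Finset.Icc 1 m, j ∣ l j),
          ∏ i ∈ Finset.Icc 1 m, (PowerSeries.coeff (l i)) (gg R c i) := by
      refine (Finset.sum_filter_of_ne ?_).symm
      intro l hl hne
      by_contra hforall
      push_neg at hforall
      obtain ⟨j, hj, hjd⟩ := hforall
      apply hne
      apply Finset.prod_eq_zero hj
      have hlj : l j ≠ 0 := fun h => hjd (h ▸ dvd_zero j)
      simp [gg, PowerSeries.coeff_mk, hlj, hjd]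
    rw [hstep]
    set D : (Fin m → ℕ) → ℕ → ℕ := fun d k => if h : k < m then d ⟨k, h⟩ else 0 with hD
    have hDval : ∀ (d : Fin m → ℕ) (i : Fin m), D d i.1 = d i := by
      intro d i; simp [hD, i.2]
    refine Finset.sum_nbij'
      (fun d : Fin m → ℕ => Finsupp.onFinset (Finset.Icc 1 m)
        (fun j => j * D d (j - 1))
        (fun j h => by
          by_contra hc
          simp only [Finset.mem_Icc, not_and_or, not_le] at hc
          rcases hc with hc | hc
          · interval_cases j <;> simp_all
          · have : ¬ (j - 1 < m) := by omega
            simp [hD, this] at h))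
      (fun l (i : Fin m) => l (i.1 + 1) / (i.1 + 1))
      ?_ ?_ ?_ ?_ ?_
    · -- forward membership
      intro d hd
      simp only [Finset.mem_filter, Fintype.mem_piFinset, Finset.mem_range,
        Finset.mem_finsuppAntidiag] at hd ⊢
      obtain ⟨-, hsum⟩ := hd
      refine ⟨⟨?_, Finsupp.support_onFinset_subset⟩, ?_⟩
      · show ∑ j ∈ Finset.Icc 1 m, j * D d (j - 1) = n
        rw [sum_Icc_one, ← hsum]
        apply Finset.sum_congr rfl
        intro i _
        rw [Nat.add_sub_cancel, hDval]
      · intro j hj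
        exact Dvd.intro _ rfl
    · -- backward membership
      intro l hl
      simp only [Finset.mem_filter, Finset.mem_finsuppAntidiag] at hl
      obtain ⟨⟨hsum, hsupp⟩, hdvd⟩ := hl
      simp only [Finset.mem_filter, Fintype.mem_piFinset, Finset.mem_range]
      constructor
      · intro i
        have hmem : i.1 + 1 ∈ Finset.Icc 1 m := by simp
        have h1 : l (i.1 + 1) ≤ n := by
          rw [← hsum]
          exact Finset.single_le_sum (f := fun j => l j) (fun _ _ => Nat.zero_le _) hmem
        have h2 := Nat.div_le_self (l (i.1 + 1)) (i.1 + 1)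
        omega
      · rw [← hsum, sum_Icc_one]
        apply Finset.sum_congr rfl
        intro i _
        have hmem : i.1 + 1 ∈ Finset.Icc 1 m := by simp
        exact Nat.mul_div_cancel' (hdvd _ hmem)
    · -- left inverse
      intro d _
      funext i
      show (i.1 + 1) * D d (i.1 + 1 - 1) / (i.1 + 1) = d i
      rw [Nat.add_sub_cancel, hDval, Nat.mul_div_cancel_left _ (Nat.succ_pos _)]
    · -- right inverse
      intro l hl
      simp only [Finset.mem_filter, Finset.mem_finsuppAntidiag] at hl
      obtain ⟨⟨hsum, hsupp⟩, hdvd⟩ := hl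
      ext j
      show j * D (fun i : Fin m => l (i.1 + 1) / (i.1 + 1)) (j - 1) = l j
      by_cases hj : j ∈ Finset.Icc 1 m
      · simp only [Finset.mem_Icc] at hj
        have hjm : j - 1 < m := by omega
        rw [hD]
        simp only [dif_pos hjm]
        have hj1 : j - 1 + 1 = j := by omega
        rw [hj1]
        exact Nat.mul_div_cancel' (hdvd _ (by simp [Finset.mem_Icc]; omega))
      · have hl0 : l j = 0 := by
          by_contra h
          exact hj (hsupp (Finsupp.mem_support_iff.mpr h))
        rw [hl0]
        simp only [Finset.mem_Icc, not_and_or, not_le] at hj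
        rcases hj with hc | hc
        · interval_cases j <;> simp
        · have : ¬ (j - 1 < m) := by omega
          rw [hD]; simp [this]
    · -- values agree
      intro d hd
      simp only [Finset.mem_filter, Fintype.mem_piFinset, Finset.mem_range] at hd
      rw [Finset.card_filter, ← Finset.prod_pow_eq_pow_sum, prod_Icc_one]
      apply Finset.prod_congr rfl
      intro i _
      show _ = (PowerSeries.coeff ((i.1 + 1) * D d (i.1 + 1 - 1))) (gg R c (i.1 + 1))
      rw [Nat.add_sub_cancel, hDval]
      simp only [gg, PowerSeries.coeff_mk]
      by_cases h0 : d i = 0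
      · simp [h0]
      · have hne : (i.1 + 1) * d i ≠ 0 := by positivity
        simp [h0, hne, Nat.pos_of_ne_zero h0, Dvd.intro _ rfl]
  rw [key, ← Finset.prod_mul_distrib]
  apply Finset.prod_congr rfl
  intro j hj
  exact gg_mul R c j (by simp at hj; omega)
end
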